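/- In the Banach space c₀ of real sequences converging to 0 (with the supremum norm), there exists a set T ⊆ c₀ which is Haar null and meager but not Haar meager. -/

import Mathlib

open MeasureTheory Set

/-- A set in a topological abelian group is *Haar meager* if there is a Borel set `B ⊇ A`,
a nonempty compact metric space `K` and a continuous `f : K → G` such that `f ⁻¹' (B + x)`
is meager in `K` for every `x ∈ G`. -/
def IsHaarMeager {G : Type*} [TopologicalSpace G] [AddCommGroup G] (A : Set G) : Prop :=
  ∃ B : Set G, A ⊆ B ∧ MeasurableSet[borel G] B ∧
    ∃ (K : Type) (_ : MetricSpace K) (_ : CompactSpace K) (_ : Nonempty K) (f : K → G),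
      Continuous f ∧ ∀ x : G, IsMeagre (f ⁻¹' ((fun b => b + x) '' B))

/-- A set in a topological abelian group is *Haar null* if there is a Borel probability
measure `μ` and a Borel set `B ⊇ A` with `μ (x + B) = 0` for every `x ∈ G`. -/
def IsHaarNull {G : Type*} [TopologicalSpace G] [AddCommGroup G] (A : Set G) : Prop :=
  ∃ μ : @Measure G (borel G), @IsProbabilityMeasure G (borel G) μ ∧
    ∃ B : Set G, A ⊆ B ∧ MeasurableSet[borel G] B ∧
      ∀ x : G, μ ((fun b => x + b) '' B) = 0

open ZeroAtInfty

/-!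
Take `T = D ∩ F` with `D = {y | ∀ m, |y (2m)| ≤ |y (2m+1)|}` and `F = {y | |y (2n)| < 8⁻ⁿ` for
infinitely many `n}`. `D` is closed with empty interior, so `T` is meagre. A translate of `F` meets
the line `ℝ • (2⁻ᵏ)ₖ` in a Lebesgue-null set by Borel–Cantelli, since the `n`-th condition confines
`θ` to an interval of length `2 · 2⁻ⁿ`; hence `T` is Haar null.

Given a compact family `f : K → c₀`, the `|f k|` have a common envelope `ε ∈ c₀`. A translate `x`
whose odd coordinates are very negative puts every `f k - x` into `D`, and copying `x (2n)` from
`f` at the points of a dense sequence of `K`, each visited infinitely often through `Nat.unpair`,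
makes `{k | f k - x ∈ F}` a dense Gδ. So no compact family witnesses that `T` is Haar meagre.
-/

open Filter Topology

theorem IsHaarNull.mono {G : Type*} [TopologicalSpace G] [AddCommGroup G] {A A' : Set G}
    (h : IsHaarNull A) (hA' : A' ⊆ A) : IsHaarNull A' := by
  obtain ⟨μ, hμ, B, hAB, hB, hμB⟩ := h
  exact ⟨μ, hμ, B, hA'.trans hAB, hB, hμB⟩

theorem isHaarNull_of_forall_volume_eq_zero {E : Type*} [TopologicalSpace E] [AddCommGroup E]
    [Module ℝ E] [ContinuousAdd E] [ContinuousSMul ℝ E] {B : Set E}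
    (hB : MeasurableSet[borel E] B) (v : E) (h : ∀ x, volume {θ : ℝ | θ • v - x ∈ B} = 0) :
    IsHaarNull B := by
  let _ : MeasurableSpace E := borel E
  have : BorelSpace E := ⟨rfl⟩
  have hline : Measurable fun θ : ℝ => θ • v := (continuous_id.smul continuous_const).measurable
  have : IsProbabilityMeasure (volume.restrict (Icc (0 : ℝ) 1)) := ⟨by simp⟩
  refine ⟨(volume.restrict (Icc (0 : ℝ) 1)).map fun θ => θ • v,
    Measure.isProbabilityMeasure_map hline.aemeasurable, B, subset_rfl, hB, fun x => ?_⟩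
  have hpre : (fun θ : ℝ => θ • v) ⁻¹' ((fun b => x + b) '' B) = {θ | θ • v - x ∈ B} := by
    ext θ
    simp [image_add_left, neg_add_eq_sub]
  rw [Measure.map_apply hline, hpre]
  · exact nonpos_iff_eq_zero.1 ((Measure.restrict_apply_le _ _).trans (h x).le)
  · rw [image_add_left]
    exact (continuous_const.add continuous_id).measurable hB

theorem not_isHaarMeager_of_forall_mem_residual {G : Type*} [TopologicalSpace G] [AddCommGroup G]
    {A : Set G}
    (h : ∀ (K : Type) [MetricSpace K] [CompactSpace K] [Nonempty K] (f : K → G), Continuous f →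
      ∃ x, {k | f k - x ∈ A} ∈ residual K) :
    ¬ IsHaarMeager A := by
  rintro ⟨B, hAB, -, K, _, _, _, f, hf, hB⟩
  obtain ⟨x, hx⟩ := h K f hf
  refine not_isMeagre_of_mem_residual (mem_of_superset hx fun k hk => ?_) (hB x)
  rw [mem_preimage, image_add_right, mem_preimage, ← sub_eq_add_neg]
  exact hAB hk

theorem residual_setOf_frequently_mem {X : Type*} [TopologicalSpace X] {U : ℕ → Set X}
    (hU : ∀ n, IsOpen (U n)) {d : ℕ → X} (hd : DenseRange d)
    (hdU : ∀ j, ∃ᶠ n in atTop, d j ∈ U n) :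
    {x | ∃ᶠ n in atTop, x ∈ U n} ∈ residual X := by
  simp only [frequently_atTop, ofPred_forall]
  refine countable_iInter_mem.2 fun N => residual_of_dense_open ?_ ?_
  · convert isOpen_biUnion (s := Ici N) fun n _ => hU n using 1
    ext
    simp
  · exact hd.mono (range_subset_iff.2 fun j => frequently_atTop.1 (hdU j) N)

theorem Real.volume_setOf_frequently_abs_mul_sub_lt_eq_zero {a c r : ℕ → ℝ} (hc : ∀ n, 0 < c n)
    (hr : Summable fun n => r n / c n) :
    volume {θ : ℝ | ∃ᶠ n in atTop, |θ * c n - a n| < r n} = 0 := by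
  have hball : ∀ n, {θ : ℝ | |θ * c n - a n| < r n} = Metric.ball (a n / c n) (r n / c n) := by
    intro n
    ext θ
    have : θ * c n - a n = (θ - a n / c n) * c n := by field_simp [(hc n).ne']
    rw [mem_ofPred_eq, this, abs_mul, abs_of_pos (hc n), ← lt_div_iff₀ (hc n), Metric.mem_ball,
      Real.dist_eq]
  refine measure_setOfPred_frequently_eq_zero ?_
  simp_rw [hball, Real.volume_ball]
  exact (hr.mul_left 2).tsum_ofReal_ne_top

namespace ZeroAtInftyContinuousMap

variable {α β : Type*} [TopologicalSpace α]

theorem dist_apply_le_dist [PseudoMetricSpace β] [Zero β] (f g : C₀(α, β)) (x : α) :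
    dist (f x) (g x) ≤ dist f g :=
  BoundedContinuousFunction.dist_coe_le_dist (f := f.toBCF) (g := g.toBCF) x

instance [PseudoMetricSpace β] [Zero β] : ContinuousEvalConst C₀(α, β) α β where
  continuous_eval_const x :=
    (BoundedContinuousFunction.lipschitz_eval_const x).continuous.comp isometry_toBCF.continuous

theorem norm_apply_le [SeminormedAddCommGroup β] (f : C₀(α, β)) (x : α) : ‖f x‖ ≤ ‖f‖ :=
  norm_toBCF_eq_norm (f := f) ▸ f.toBCF.norm_coe_le_norm x

theorem norm_le_of_forall_le [SeminormedAddCommGroup β] {f : C₀(α, β)} {C : ℝ} (hC : 0 ≤ C)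
    (h : ∀ x, ‖f x‖ ≤ C) : ‖f‖ ≤ C :=
  norm_toBCF_eq_norm (f := f) ▸ (BoundedContinuousFunction.norm_le hC).2 h

theorem eventually_forall_norm_lt_of_isCompact [SeminormedAddCommGroup β] {S : Set C₀(α, β)}
    (hS : IsCompact S) {δ : ℝ} (hδ : 0 < δ) : ∀ᶠ x in cocompact α, ∀ f ∈ S, ‖f x‖ < δ := by
  obtain ⟨t, -, ht, hSt⟩ := hS.finite_cover_balls (half_pos hδ)
  have hsmall : ∀ᶠ x in cocompact α, ∀ g ∈ t, ‖g x‖ < δ / 2 :=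
    (eventually_all_finite ht).2 fun g _ =>
      (tendsto_zero_iff_norm_tendsto_zero.1 g.zero_at_infty').eventually (gt_mem_nhds (half_pos hδ))
  filter_upwards [hsmall] with x hx f hf
  obtain ⟨g, hg, hfg⟩ := mem_iUnion₂.1 (hSt hf)
  calc ‖f x‖ ≤ ‖f x - g x‖ + ‖g x‖ := norm_le_norm_sub_add _ _
    _ < δ / 2 + δ / 2 := by
      rw [← dist_eq_norm]
      exact add_lt_add_of_le_of_lt ((dist_apply_le_dist f g x).trans (Metric.mem_ball.1 hfg).le)
        (hx g hg)
    _ = δ := add_halves δ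

theorem tendsto_atTop_nhds_zero [TopologicalSpace β] [Zero β] (f : C₀(ℕ, β)) :
    Tendsto f atTop (𝓝 0) :=
  cocompact_eq_atTop (α := ℕ) ▸ f.zero_at_infty'

def ofTendstoAtTop [TopologicalSpace β] [Zero β] (g : ℕ → β) (hg : Tendsto g atTop (𝓝 0)) :
    C₀(ℕ, β) where
  toFun := g
  continuous_toFun := continuous_of_discreteTopology
  zero_at_infty' := cocompact_eq_atTop (α := ℕ) ▸ hg

@[simp]
theorem coe_ofTendstoAtTop [TopologicalSpace β] [Zero β] (g : ℕ → β) (hg : Tendsto g atTop (𝓝 0)) :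
    ⇑(ofTendstoAtTop g hg) = g :=
  rfl

end ZeroAtInftyContinuousMap

open ZeroAtInftyContinuousMap

theorem exists_tendsto_zero_forall_abs_le_of_isCompact {S : Set C₀(ℕ, ℝ)} (hS : IsCompact S) :
    ∃ ε : ℕ → ℝ, (∀ n, 0 ≤ ε n) ∧ Tendsto ε atTop (𝓝 0) ∧ ∀ y ∈ S, ∀ n, |y n| ≤ ε n := by
  obtain ⟨C, hC⟩ := hS.isBounded.exists_norm_le
  have hbdd : ∀ n, BddAbove (range fun y : S => |y.1 n|) := fun n =>
    ⟨C, forall_mem_range.2 fun y => (norm_apply_le y.1 n).trans (hC y y.2)⟩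
  have hε0 : ∀ n, 0 ≤ ⨆ y : S, |y.1 n| := fun n => Real.iSup_nonneg fun _ => abs_nonneg _
  refine ⟨fun n => ⨆ y : S, |y.1 n|, hε0, ?_, fun y hy n => le_ciSup (hbdd n) (⟨y, hy⟩ : S)⟩
  refine tendsto_order.2 ⟨fun a ha => .of_forall fun n => ha.trans_le (hε0 n), fun a ha => ?_⟩
  have hsmall :=
    cocompact_eq_atTop (α := ℕ) ▸ eventually_forall_norm_lt_of_isCompact hS (half_pos ha)
  filter_upwards [hsmall] with n hn
  exact (Real.iSup_le (fun y : S => (hn y.1 y.2).le) (half_pos ha).le).trans_lt (half_lt_self ha)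

def evenDominated : Set C₀(ℕ, ℝ) := {y | ∀ m, |y (2 * m)| ≤ |y (2 * m + 1)|}

def evenFrequentlySmall : Set C₀(ℕ, ℝ) := {y | ∃ᶠ n in atTop, |y (2 * n)| < (1 / 8 : ℝ) ^ n}

theorem isClosed_evenDominated : IsClosed evenDominated := by
  simp only [evenDominated, ofPred_forall]
  exact isClosed_iInter fun m =>
    isClosed_le (continuous_eval_const _).abs (continuous_eval_const _).abs

theorem interior_evenDominated : interior evenDominated = ∅ := by
  refine eq_empty_iff_forall_notMem.2 fun z hz => ?_
  obtain ⟨r, hr, hball⟩ := Metric.mem_nhds_iff.1 (mem_interior_iff_mem_nhds.1 hz)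
  obtain ⟨M, hM⟩ := eventually_atTop.1
    ((tendsto_zero_iff_norm_tendsto_zero.1 (tendsto_atTop_nhds_zero z)).eventually
      (gt_mem_nhds (by positivity : 0 < r / 4)))
  have hsingle : Tendsto (Pi.single (2 * M) (r / 2) : ℕ → ℝ) atTop (𝓝 0) :=
    tendsto_const_nhds.congr' <| (eventually_gt_atTop (2 * M)).mono fun k hk => by
      simp [hk.ne']
  set w := ofTendstoAtTop _ hsingle
  have hw : ‖w‖ < r := by
    refine (norm_le_of_forall_le (half_pos hr).le fun k => ?_).trans_lt (half_lt_self hr)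
    rcases eq_or_ne k (2 * M) with rfl | hk
    · simp [w, abs_of_pos hr]
    · simpa [w, Pi.single_eq_of_ne hk] using (half_pos hr).le
  have hzw : z + w ∈ evenDominated :=
    hball (by rwa [Metric.mem_ball, dist_eq_norm, add_sub_cancel_left])
  have h := hzw M
  simp only [coe_add, Pi.add_apply, w, coe_ofTendstoAtTop, Pi.single_eq_same,
    Pi.single_eq_of_ne (show 2 * M + 1 ≠ 2 * M by omega), add_zero] at h
  have h0 := hM (2 * M) (by omega)
  have h1 := hM (2 * M + 1) (by omega)
  rw [Real.norm_eq_abs] at h0 h1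
  linarith [le_abs_self (z (2 * M) + r / 2), neg_abs_le (z (2 * M))]

theorem isMeagre_evenDominated : IsMeagre evenDominated :=
  (isClosed_evenDominated.isNowhereDense_iff.2 interior_evenDominated).isMeagre

theorem measurableSet_evenFrequentlySmall : MeasurableSet[borel C₀(ℕ, ℝ)] evenFrequentlySmall := by
  let _ : MeasurableSpace C₀(ℕ, ℝ) := borel C₀(ℕ, ℝ)
  have : BorelSpace C₀(ℕ, ℝ) := ⟨rfl⟩
  have hlimsup : evenFrequentlySmall =
      limsup (fun n => {y : C₀(ℕ, ℝ) | |y (2 * n)| < (1 / 8 : ℝ) ^ n}) atTop := by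
    ext y
    simp [evenFrequentlySmall, mem_limsup_iff_frequently_mem]
  rw [hlimsup]
  exact .measurableSet_limsup fun n =>
    (isOpen_lt (continuous_eval_const _).abs continuous_const).measurableSet

theorem isHaarNull_evenFrequentlySmall : IsHaarNull evenFrequentlySmall := by
  have hv : Tendsto (fun k => (1 / 2 : ℝ) ^ k) atTop (𝓝 0) :=
    tendsto_pow_atTop_nhds_zero_of_lt_one (by norm_num) (by norm_num)
  refine isHaarNull_of_forall_volume_eq_zero measurableSet_evenFrequentlySmall
    (ofTendstoAtTop _ hv) fun x => ?_
  have hr : Summable fun n => (1 / 8 : ℝ) ^ n / (1 / 4) ^ n := by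
    have hratio : ∀ n, (1 / 8 : ℝ) ^ n / (1 / 4) ^ n = (1 / 2) ^ n := fun n => by
      rw [← div_pow]
      norm_num
    simpa only [hratio] using summable_geometric_two
  convert Real.volume_setOf_frequently_abs_mul_sub_lt_eq_zero (a := fun n => x (2 * n))
    (fun n => by positivity) hr using 3 with θ
  simp [evenFrequentlySmall, pow_mul]
  norm_num

theorem exists_forall_sub_mem_evenDominated {S : Set C₀(ℕ, ℝ)} (hS : IsCompact S)
    (s : ℕ → C₀(ℕ, ℝ)) (hs : ∀ n, s n ∈ S) :
    ∃ x : C₀(ℕ, ℝ), (∀ n, x (2 * n) = s n (2 * n)) ∧ ∀ y ∈ S, y - x ∈ evenDominated := by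
  obtain ⟨ε, hε0, hε, hSε⟩ := exists_tendsto_zero_forall_abs_le_of_isCompact hS
  -- `x (2m+1) = -b (2m+1) = -2 (ε (2m) + ε (2m+1))` is negative enough for domination, and `b`
  -- also bounds the even coordinates `|x (2m)| ≤ ε (2m)`, so `x ∈ c₀` by squeezing.
  set b : ℕ → ℝ := fun k => 2 * (ε (k - 1) + ε k) with hb_def
  have hb0 : ∀ k, 0 ≤ b k := fun k => mul_nonneg zero_le_two (add_nonneg (hε0 _) (hε0 _))
  have hb : Tendsto b atTop (𝓝 0) := by
    simpa using ((hε.comp (tendsto_sub_atTop_nat 1)).add hε).const_mul 2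
  set g : ℕ → ℝ := fun k => if Even k then s (k / 2) k else -b k
  have hg : ∀ k, ‖g k‖ ≤ b k := by
    intro k
    by_cases hk : Even k
    · simp only [g, if_pos hk, Real.norm_eq_abs, hb_def]
      linarith [hSε _ (hs (k / 2)) k, hε0 (k - 1), hε0 k]
    · simp only [g, if_neg hk, norm_neg, Real.norm_eq_abs, abs_of_nonneg (hb0 k), le_refl]
  have heven : ∀ n, g (2 * n) = s n (2 * n) := fun n => by simp [g]
  have hodd : ∀ n, g (2 * n + 1) = -b (2 * n + 1) := fun n =>
    if_neg (Nat.not_even_two_mul_add_one n)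
  refine ⟨ofTendstoAtTop g (squeeze_zero_norm hg hb), heven, fun y hy m => ?_⟩
  simp only [coe_sub, Pi.sub_apply, coe_ofTendstoAtTop, heven, hodd, hb_def, Nat.add_sub_cancel]
  have h1 := hSε y hy (2 * m)
  have h2 := hSε y hy (2 * m + 1)
  have h3 := hSε _ (hs m) (2 * m)
  calc |y (2 * m) - s m (2 * m)| ≤ |y (2 * m)| + |s m (2 * m)| := abs_sub _ _
    _ ≤ y (2 * m + 1) - -(2 * (ε (2 * m) + ε (2 * m + 1))) := by
      linarith [neg_abs_le (y (2 * m + 1)), abs_nonneg (y (2 * m + 1))]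
    _ ≤ _ := le_abs_self _

theorem exists_residual_sub_mem_evenDominated_inter_evenFrequentlySmall {K : Type*}
    [TopologicalSpace K] [CompactSpace K] [TopologicalSpace.SeparableSpace K] [Nonempty K]
    {f : K → C₀(ℕ, ℝ)} (hf : Continuous f) :
    ∃ x, {k | f k - x ∈ evenDominated ∩ evenFrequentlySmall} ∈ residual K := by
  obtain ⟨d, hd⟩ := TopologicalSpace.exists_dense_seq K
  obtain ⟨x, hx, hdom⟩ := exists_forall_sub_mem_evenDominated (isCompact_range hf)
    (fun n => f (d n.unpair.1)) fun n => mem_range_self _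
  have hU : ∀ n, IsOpen {k | |f k (2 * n) - x (2 * n)| < (1 / 8 : ℝ) ^ n} := fun n =>
    isOpen_lt (((continuous_eval_const _).comp hf).sub continuous_const).abs continuous_const
  have hdU : ∀ j, ∃ᶠ n in atTop, |f (d j) (2 * n) - x (2 * n)| < (1 / 8 : ℝ) ^ n := fun j =>
    frequently_atTop.2 fun N => ⟨Nat.pair j N, Nat.right_le_pair j N, by simp [hx]⟩
  refine ⟨x, mem_of_superset (residual_setOf_frequently_mem hU hd hdU) fun k hk =>
    ⟨hdom _ (mem_range_self k), ?_⟩⟩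
  simpa [evenFrequentlySmall] using hk

/-- In the Banach space `c₀ = C₀(ℕ, ℝ)` of real sequences converging to `0` with the
supremum norm, there exists a set which is Haar null and meager but not Haar meager. -/
theorem exists_haarNull_meager_not_haarMeager_c0 :
    ∃ T : Set C₀(ℕ, ℝ), IsHaarNull T ∧ IsMeagre T ∧ ¬ IsHaarMeager T :=
  ⟨evenDominated ∩ evenFrequentlySmall, isHaarNull_evenFrequentlySmall.mono inter_subset_right,
    isMeagre_evenDominated.mono inter_subset_left,
    not_isHaarMeager_of_forall_mem_residual fun _ _ _ _ _ hf =>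
      exists_residual_sub_mem_evenDominated_inter_evenFrequentlySmall hf⟩
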